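/- Let (V,F) be a filtered vector space over k and let U_1, U_2 ⊆ V be subspaces, each equipped with the induced filtration (and likewise U_1 + U_2 and U_1 ∩ U_2). Then deg(U_1 + U_2) ≥ deg(U_1) + deg(U_2) − deg(U_1 ∩ U_2). -/
import Mathlib


open Submodule Module

/-- An ℝ-filtration on a `k`-vector space `V`: an antitone family of subspaces which is
exhaustive, separated, and left-continuous. -/
structure RFiltration (k V : Type*) [Field k] [AddCommGroup V] [Module k V] where
  filt : ℝ → Submodule k V
  antitone' : Antitone filt
  eventually_top : ∃ a : ℝ, ∀ x : ℝ, x ≤ a → filt x = ⊤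
  eventually_bot : ∃ b : ℝ, ∀ x : ℝ, b ≤ x → filt x = ⊥
  left_cont : ∀ x : ℝ, filt x = ⨅ y : {y : ℝ // y < x}, filt y.1

namespace RFiltration

variable {k V W : Type*} [Field k] [AddCommGroup V] [Module k V]
  [AddCommGroup W] [Module k W]

/-- `F^{x+} = ⋃_{y > x} F^y`. -/
noncomputable def plus (F : RFiltration k V) (x : ℝ) : Submodule k V :=
  ⨆ y : {y : ℝ // x < y}, F.filt y.1

/-- `dim gr^x(V) = dim (F^x / F^{x+})`. -/
noncomputable def grDim (F : RFiltration k V) (x : ℝ) : ℕ :=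
  Module.finrank k (↥(F.filt x) ⧸ (F.plus x).comap (F.filt x).subtype)

/-- The degree `deg(V,F) = ∑_x x · dim gr^x(V)`. -/
noncomputable def deg (F : RFiltration k V) : ℝ :=
  ∑ᶠ x : ℝ, x * (F.grDim x : ℝ)

/-- The induced filtration `U ∩ F^x` on a subspace `U ⊆ V`. -/
noncomputable def induced (F : RFiltration k V) (U : Submodule k V) : RFiltration k U where
  filt x := (F.filt x).comap U.subtype
  antitone' := fun _ _ h => Submodule.comap_mono (F.antitone' h)
  eventually_top := by
    obtain ⟨a, ha⟩ := F.eventually_top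
    exact ⟨a, fun x hx => by simp [ha x hx]⟩
  eventually_bot := by
    obtain ⟨b, hb⟩ := F.eventually_bot
    exact ⟨b, fun x hx => by simp [hb x hx, Submodule.comap_bot, Submodule.ker_subtype]⟩
  left_cont := by
    intro x
    show (F.filt x).comap U.subtype = _
    rw [F.left_cont x]
    ext m
    simp [Submodule.mem_iInf]

end RFiltration

namespace RFiltration
variable {k V : Type*} [Field k] [AddCommGroup V] [Module k V]

variable (F : RFiltration k V)

lemma filt_le_plus {x y : ℝ} (h : x < y) : F.filt y ≤ F.plus x :=
  le_iSup (fun y : {y : ℝ // x < y} => F.filt y.1) ⟨y, h⟩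

lemma plus_le_filt (x : ℝ) : F.plus x ≤ F.filt x :=
  iSup_le fun y => F.antitone' (le_of_lt y.2)

variable [FiniteDimensional k V]

/-- In finite dimension the `plus` submodule is attained. -/
lemma exists_plus_eq (x : ℝ) :
    ∃ y, x < y ∧ F.plus x = F.filt y ∧ ∀ z, x < z → z ≤ y → F.filt z = F.filt y := by
  have hne : {W | ∃ y, x < y ∧ F.filt y = W}.Nonempty := ⟨F.filt (x+1), x+1, by linarith, rfl⟩
  obtain ⟨W, ⟨y₀, hy₀, hWy⟩, hmax⟩ :=
    set_has_maximal_iff_noetherian.mpr (inferInstance : IsNoetherian k V) _ hne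
  -- hmax : ∀ W' ∈ set, ¬ W < W'
  have hle : ∀ z, x < z → F.filt z ≤ W := by
    intro z hz
    rcases le_total z y₀ with h | h
    · have h1 : W ≤ F.filt z := hWy ▸ F.antitone' h
      by_contra hnot
      exact hmax (F.filt z) ⟨z, hz, rfl⟩ (lt_of_le_of_ne h1 (fun e => hnot (le_of_eq e.symm)))
    · exact hWy ▸ F.antitone' h
  rw [← hWy] at hle
  refine ⟨y₀, hy₀, ?_, ?_⟩
  · exact le_antisymm (iSup_le fun z => hle z.1 z.2) (F.filt_le_plus hy₀)
  · intro z hz hzy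
    exact le_antisymm (hle z hz) (F.antitone' hzy)

/-- The set of jump points of `F`. -/
def jumps : Set ℝ := {x | F.plus x ≠ F.filt x}

lemma jumps_finite : (F.jumps).Finite := by
  have hinj : Set.InjOn (fun x => finrank k (F.filt x)) F.jumps := by
    have key : ∀ x ∈ F.jumps, ∀ x' ∈ F.jumps, x < x' →
        finrank k (F.filt x') < finrank k (F.filt x) := by
      intro x hx x' _ hlt
      have h1 : F.filt x' ≤ F.plus x := F.filt_le_plus hlt
      have h2 : F.plus x < F.filt x := lt_of_le_of_ne (F.plus_le_filt x) hx
      exact lt_of_le_of_lt (Submodule.finrank_mono h1) (Submodule.finrank_lt_finrank_of_lt h2)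
    intro x hx x' hx' he
    rcases lt_trichotomy x x' with h | h | h
    · exact absurd he (ne_of_gt (key x hx x' hx' h))
    · exact h
    · exact absurd he (ne_of_lt (key x' hx' x hx h))
  have himg : ((fun x => finrank k (F.filt x)) '' F.jumps).Finite :=
    (Set.finite_Icc 0 (finrank k V)).subset (by
      rintro - ⟨x, -, rfl⟩
      exact ⟨Nat.zero_le _, Submodule.finrank_le _⟩)
  exact Set.Finite.of_finite_image himg hinj

/-- Between two points where the filtration differs there is a jump. -/
lemma exists_jump {a b : ℝ} (hab : a < b) (hne : F.filt a ≠ F.filt b) :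
    ∃ c, a ≤ c ∧ c < b ∧ c ∈ F.jumps := by
  set T : Set ℝ := {t | t ∈ Set.Icc a b ∧ F.filt t = F.filt a} with hT
  have haT : a ∈ T := ⟨⟨le_refl a, le_of_lt hab⟩, rfl⟩
  have hbdd : BddAbove T := ⟨b, fun t ht => ht.1.2⟩
  set s := sSup T with hs
  have has : a ≤ s := le_csSup hbdd haT
  have hsb : s ≤ b := csSup_le ⟨a, haT⟩ fun t ht => ht.1.2
  -- filt is equal to filt a on [a, s)
  have hconst : ∀ y, a ≤ y → y < s → F.filt y = F.filt a := by
    intro y hay hys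
    obtain ⟨t, htT, hyt⟩ := exists_lt_of_lt_csSup ⟨a, haT⟩ hys
    exact le_antisymm (F.antitone' hay) (htT.2 ▸ F.antitone' (le_of_lt hyt))
  have hfs : F.filt s = F.filt a := by
    rcases eq_or_lt_of_le has with h | h
    · rw [← h]
    · rw [F.left_cont s]
      apply le_antisymm
      · have : max a ((a+s)/2) < s := by
          rcases le_total a ((a+s)/2) with h' | h'
          · rw [max_eq_right h']; linarith
          · rw [max_eq_left h']; exact h
        calc (⨅ y : {y : ℝ // y < s}, F.filt y.1) ≤ F.filt (max a ((a+s)/2)) :=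
              iInf_le (fun y : {y : ℝ // y < s} => F.filt y.1) ⟨_, this⟩
          _ = F.filt a := hconst _ (le_max_left _ _) this
      · refine le_iInf fun y => ?_
        rcases lt_or_ge y.1 a with h' | h'
        · exact F.antitone' (le_of_lt h')
        · exact le_of_eq (hconst y.1 h' y.2).symm
  have hsltb : s < b := lt_of_le_of_ne hsb (fun e => hne (by rw [← hfs, e]))
  refine ⟨s, has, hsltb, ?_⟩
  intro hplus
  obtain ⟨y₀, hy₀s, hpy, -⟩ := F.exists_plus_eq s
  have hy₀a : F.filt y₀ = F.filt a := by rw [← hpy, hplus, hfs]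
  rcases le_total y₀ b with h | h
  · have : y₀ ≤ s := le_csSup hbdd ⟨⟨has.trans (le_of_lt hy₀s), h⟩, hy₀a⟩
    exact absurd hy₀s (not_lt.mpr this)
  · have h1 : F.filt b ≤ F.filt a := F.antitone' (le_of_lt hab)
    have h2 : F.filt a ≤ F.filt b := hy₀a ▸ F.antitone' h
    exact hne (le_antisymm h2 h1)

lemma finrank_comap_subtype (U W : Submodule k V) :
    finrank k (W.comap U.subtype) = finrank k ↥(W ⊓ U) := by
  have he : W.comap U.subtype = (W ⊓ U).comap U.subtype := by
    ext u; simp [u.2]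
  rw [he]
  exact (Submodule.comapSubtypeEquivOfLe inf_le_right).finrank_eq

lemma induced_filt (U : Submodule k V) (x : ℝ) :
    (F.induced U).filt x = (F.filt x).comap U.subtype := rfl

lemma induced_plus (U : Submodule k V) (x : ℝ) :
    (F.induced U).plus x = (F.plus x).comap U.subtype := by
  obtain ⟨y₀, hy₀, hpy, -⟩ := F.exists_plus_eq x
  apply le_antisymm
  · exact iSup_le fun y => Submodule.comap_mono (F.filt_le_plus y.2)
  · rw [hpy]
    exact le_iSup (fun y : {y : ℝ // x < y} => ((F.filt y.1).comap U.subtype)) ⟨y₀, hy₀⟩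

lemma grDim_eq_sub {k V : Type*} [Field k] [AddCommGroup V] [Module k V]
    [FiniteDimensional k V] (G : RFiltration k V) (x : ℝ) :
    G.grDim x = finrank k (G.filt x) - finrank k (G.plus x) := by
  have h1 : finrank k (G.filt x ⧸ (G.plus x).comap (G.filt x).subtype)
      + finrank k ((G.plus x).comap (G.filt x).subtype) = finrank k (G.filt x) :=
    Submodule.finrank_quotient_add_finrank _
  have h2 : finrank k ((G.plus x).comap (G.filt x).subtype) = finrank k (G.plus x) := by
    rw [finrank_comap_subtype (G.filt x) (G.plus x), inf_eq_left.mpr (G.plus_le_filt x)]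
  have h0 : G.grDim x = finrank k (↥(G.filt x) ⧸ (G.plus x).comap (G.filt x).subtype) := rfl
  omega

lemma grDim_induced_cast (U : Submodule k V) (x : ℝ) :
    ((F.induced U).grDim x : ℝ) =
      (finrank k ↥(F.filt x ⊓ U) : ℝ) - (finrank k ↥(F.plus x ⊓ U) : ℝ) := by
  rw [grDim_eq_sub, induced_filt, induced_plus, finrank_comap_subtype, finrank_comap_subtype]
  have hle : finrank k ↥(F.plus x ⊓ U) ≤ finrank k ↥(F.filt x ⊓ U) :=
    Submodule.finrank_mono (inf_le_inf_right U (F.plus_le_filt x))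
  push_cast [Nat.cast_sub hle]
  ring

lemma grDim_eq_zero_of_not_jump (U : Submodule k V) {x : ℝ} (hx : x ∉ F.jumps) :
    (F.induced U).grDim x = 0 := by
  have : F.plus x = F.filt x := not_ne_iff.mp hx
  have h := F.grDim_induced_cast U x
  rw [this] at h
  have : ((F.induced U).grDim x : ℝ) = 0 := by rw [h]; ring
  exact_mod_cast this

lemma abel_nonneg (n : ℕ) (x Δ : ℕ → ℝ) (h0 : Δ 0 = 0) (hn : Δ n = 0)
    (hx : ∀ i, i + 1 < n → x i ≤ x (i + 1)) (hΔ : ∀ i, 0 ≤ Δ i) :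
    0 ≤ ∑ i ∈ Finset.range n, x i * (Δ i - Δ (i + 1)) := by
  have key : ∑ i ∈ Finset.range n, x i * (Δ i - Δ (i + 1))
      = ∑ i ∈ Finset.range n, (x (i + 1) - x i) * Δ (i + 1)
        + ∑ i ∈ Finset.range n, (x i * Δ i - x (i + 1) * Δ (i + 1)) := by
    rw [← Finset.sum_add_distrib]
    exact Finset.sum_congr rfl fun i _ => by ring
  have tel : ∑ i ∈ Finset.range n, (x i * Δ i - x (i + 1) * Δ (i + 1))
      = x 0 * Δ 0 - x n * Δ n := Finset.sum_range_sub' (fun i => x i * Δ i) n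
  rw [key, tel, h0, hn]
  have : 0 ≤ ∑ i ∈ Finset.range n, (x (i + 1) - x i) * Δ (i + 1) := by
    apply Finset.sum_nonneg
    intro i hi
    rw [Finset.mem_range] at hi
    rcases eq_or_lt_of_le (Nat.succ_le_of_lt hi) with h | h
    · rw [show i + 1 = n from h, hn, mul_zero]
    · exact mul_nonneg (by linarith [hx i h]) (hΔ _)
  linarith

lemma finrank_inf_submodular (W A B : Submodule k V) :
    finrank k ↥(W ⊓ A) + finrank k ↥(W ⊓ B) ≤
      finrank k ↥(W ⊓ (A ⊔ B)) + finrank k ↥(W ⊓ (A ⊓ B)) := by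
  have h1 := Submodule.finrank_sup_add_finrank_inf_eq (W ⊓ A) (W ⊓ B)
  have h2 : (W ⊓ A) ⊓ (W ⊓ B) = W ⊓ (A ⊓ B) := by ext v; simp only [Submodule.mem_inf]; tauto
  have h3 : (W ⊓ A) ⊔ (W ⊓ B) ≤ W ⊓ (A ⊔ B) :=
    sup_le (inf_le_inf_left _ le_sup_left) (inf_le_inf_left _ le_sup_right)
  have h4 := Submodule.finrank_mono h3
  rw [h2] at h1
  omega

end RFiltration


/-- For subspaces `U₁, U₂` of a filtered vector space, with the induced
filtrations, `deg(U₁ + U₂) ≥ deg U₁ + deg U₂ − deg(U₁ ∩ U₂)`. -/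
theorem deg_sup_ge
    {k V : Type*} [Field k] [AddCommGroup V] [Module k V] [FiniteDimensional k V]
    (F : RFiltration k V) (U₁ U₂ : Submodule k V) :
    (F.induced (U₁ ⊔ U₂)).deg ≥
      (F.induced U₁).deg + (F.induced U₂).deg - (F.induced (U₁ ⊓ U₂)).deg := by
  classical
  set S := F.jumps_finite.toFinset with hSdef
  set n := S.card with hndef
  set e : Fin n ≃o { x // x ∈ S } := S.orderIsoOfFin rfl with hedef
  set xi : ℕ → ℝ := fun i => if h : i < n then ((e ⟨i, h⟩ : { x // x ∈ S }) : ℝ) else 0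
    with hxidef
  have hxilt : ∀ i j, j < n → i < j → xi i < xi j := by
    intro i j hj hij
    have hi : i < n := hij.trans hj
    have h1 : (⟨i, hi⟩ : Fin n) < ⟨j, hj⟩ := hij
    have h2 := e.strictMono h1
    simp only [hxidef, dif_pos hi, dif_pos hj]
    exact_mod_cast h2
  have hxile : ∀ i j, j < n → i ≤ j → xi i ≤ xi j := by
    intro i j hj hij
    rcases eq_or_lt_of_le hij with rfl | h
    · exact le_rfl
    · exact (hxilt i j hj h).le
  have hxisurj : ∀ c ∈ F.jumps, ∃ j, ∃ h : j < n, xi j = c := by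
    intro c hc
    have hcS : c ∈ S := F.jumps_finite.mem_toFinset.mpr hc
    refine ⟨(e.symm ⟨c, hcS⟩).1, (e.symm ⟨c, hcS⟩).2, ?_⟩
    simp only [hxidef, dif_pos (e.symm ⟨c, hcS⟩).2]
    rw [show (⟨(e.symm ⟨c, hcS⟩).1, (e.symm ⟨c, hcS⟩).2⟩ : Fin n) = e.symm ⟨c, hcS⟩ from rfl]
    rw [e.apply_symm_apply]
  have hplus_succ : ∀ i, i + 1 < n → F.plus (xi i) = F.filt (xi (i + 1)) := by
    intro i hi1
    obtain ⟨y₀, hy₀, hpy, hconst⟩ := F.exists_plus_eq (xi i)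
    have hlt : xi i < xi (i + 1) := hxilt i (i + 1) hi1 (Nat.lt_succ_self i)
    rcases le_or_gt (xi (i + 1)) y₀ with h | h
    · rw [hpy, hconst (xi (i + 1)) hlt h]
    · by_cases hfe : F.filt y₀ = F.filt (xi (i + 1))
      · rw [hpy, hfe]
      · obtain ⟨c, hc1, hc2, hc3⟩ := F.exists_jump h hfe
        obtain ⟨j, hj, rfl⟩ := hxisurj c hc3
        have h1 : xi i < xi j := lt_of_lt_of_le hy₀ hc1
        have hji : i < j := by
          by_contra hcon
          exact absurd h1 (not_lt.mpr (hxile j i (Nat.lt_of_succ_lt hi1) (not_lt.mp hcon)))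
        have hj2 : j < i + 1 := by
          by_contra hcon
          exact absurd hc2 (not_lt.mpr (hxile (i + 1) j hj (not_lt.mp hcon)))
        omega
  have hplus_last : ∀ i, i + 1 = n → F.plus (xi i) = ⊥ := by
    intro i hi1
    have hi : i < n := by omega
    obtain ⟨y₀, hy₀, hpy, -⟩ := F.exists_plus_eq (xi i)
    obtain ⟨b, hb⟩ := F.eventually_bot
    by_cases hbot : F.filt y₀ = ⊥
    · rw [hpy, hbot]
    · have hlt : y₀ < max b y₀ + 1 := by have := le_max_right b y₀; linarith
      have hbt : F.filt (max b y₀ + 1) = ⊥ := hb _ (by have := le_max_left b y₀; linarith)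
      obtain ⟨c, hc1, hc2, hc3⟩ := F.exists_jump hlt (by rw [hbt]; exact hbot)
      obtain ⟨j, hj, rfl⟩ := hxisurj c hc3
      have h1 : xi i < xi j := lt_of_lt_of_le hy₀ hc1
      have h2 : xi j ≤ xi i := hxile j i hi (by omega)
      linarith
  have htop : 0 < n → F.filt (xi 0) = ⊤ := by
    intro hn0
    obtain ⟨a, ha⟩ := F.eventually_top
    by_cases h : F.filt (xi 0) = ⊤
    · exact h
    · exfalso
      have h1 : min a (xi 0) - 1 < xi 0 := by have := min_le_right a (xi 0); linarith
      have h2 : F.filt (min a (xi 0) - 1) = ⊤ := ha _ (by have := min_le_left a (xi 0); linarith)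
      obtain ⟨c, hc1, hc2, hc3⟩ := F.exists_jump h1 (by rw [h2]; exact fun hh => h hh.symm)
      obtain ⟨j, hj, rfl⟩ := hxisurj c hc3
      have := hxile 0 j hj (Nat.zero_le j)
      linarith
  set D : Submodule k V → ℕ → ℝ :=
    fun U i => if h : i < n then (finrank k ↥(F.filt (xi i) ⊓ U) : ℝ) else 0 with hDdef
  have hdeg : ∀ U : Submodule k V,
      (F.induced U).deg = ∑ i ∈ Finset.range n, xi i * (D U i - D U (i + 1)) := by
    intro U
    have hsupp : Function.support (fun x : ℝ => x * ((F.induced U).grDim x : ℝ)) ⊆ ↑S := by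
      intro x hx
      rw [Function.mem_support] at hx
      by_contra hxS
      have hxj : x ∉ F.jumps := fun hmem => hxS (F.jumps_finite.mem_toFinset.mpr hmem)
      rw [F.grDim_eq_zero_of_not_jump U hxj] at hx
      simp at hx
    rw [RFiltration.deg, finsum_eq_sum_of_support_subset _ hsupp]
    have hreindex : ∀ f : ℝ → ℝ, ∑ x ∈ S, f x = ∑ i ∈ Finset.range n, f (xi i) := by
      intro f
      calc ∑ x ∈ S, f x = ∑ x : { x // x ∈ S }, f ↑x := (Finset.sum_coe_sort S f).symm
        _ = ∑ i : Fin n, f ↑(e i) := (Equiv.sum_comp e.toEquiv fun x : { x // x ∈ S } => f ↑x).symm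
        _ = ∑ i : Fin n, f (xi i.1) := by
            apply Finset.sum_congr rfl
            intro i _
            congr 1
            simp only [hxidef, dif_pos i.2]
        _ = ∑ i ∈ Finset.range n, f (xi i) := Fin.sum_univ_eq_sum_range (fun i => f (xi i)) n
    rw [hreindex]
    apply Finset.sum_congr rfl
    intro i hi
    rw [Finset.mem_range] at hi
    congr 1
    rw [F.grDim_induced_cast U (xi i)]
    have hDi : D U i = (finrank k ↥(F.filt (xi i) ⊓ U) : ℝ) := by
      simp only [hDdef]; rw [dif_pos hi]
    rcases eq_or_lt_of_le (Nat.succ_le_of_lt hi) with h | h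
    · have hnot : ¬ (i + 1 < n) := by omega
      rw [hDi]
      simp only [hDdef]
      rw [dif_neg hnot, hplus_last i h]
      simp [finrank_bot]
    · rw [hDi]
      simp only [hDdef]
      rw [dif_pos h, hplus_succ i h]
  set Δ : ℕ → ℝ := fun i => D (U₁ ⊔ U₂) i + D (U₁ ⊓ U₂) i - D U₁ i - D U₂ i with hΔdef
  have hΔ0 : Δ 0 = 0 := by
    rcases Nat.eq_zero_or_pos n with h | h
    · simp only [hΔdef, hDdef]
      rw [dif_neg (by omega), dif_neg (by omega), dif_neg (by omega), dif_neg (by omega)]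
      ring
    · have ht := htop h
      simp only [hΔdef, hDdef]
      rw [dif_pos h, dif_pos h, dif_pos h, dif_pos h, ht, top_inf_eq, top_inf_eq, top_inf_eq,
        top_inf_eq]
      have h1 := Submodule.finrank_sup_add_finrank_inf_eq U₁ U₂
      have h2 := congrArg (Nat.cast : ℕ → ℝ) h1
      push_cast at h2
      linarith
  have hΔn : Δ n = 0 := by
    simp only [hΔdef, hDdef]
    rw [dif_neg (lt_irrefl n), dif_neg (lt_irrefl n), dif_neg (lt_irrefl n),
      dif_neg (lt_irrefl n)]
    ring
  have hΔpos : ∀ i, 0 ≤ Δ i := by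
    intro i
    by_cases h : i < n
    · simp only [hΔdef, hDdef]
      rw [dif_pos h, dif_pos h, dif_pos h, dif_pos h]
      have h1 := RFiltration.finrank_inf_submodular (F.filt (xi i)) U₁ U₂
      have h2 : (finrank k ↥(F.filt (xi i) ⊓ U₁) : ℝ) + (finrank k ↥(F.filt (xi i) ⊓ U₂) : ℝ) ≤
          (finrank k ↥(F.filt (xi i) ⊓ (U₁ ⊔ U₂)) : ℝ)
            + (finrank k ↥(F.filt (xi i) ⊓ (U₁ ⊓ U₂)) : ℝ) := by exact_mod_cast h1
      linarith
    · simp only [hΔdef, hDdef]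
      rw [dif_neg h, dif_neg h, dif_neg h, dif_neg h]
      norm_num
  have habel := RFiltration.abel_nonneg n xi Δ hΔ0 hΔn
    (fun i hi => (hxilt i (i + 1) hi (Nat.lt_succ_self i)).le) hΔpos
  have hsum : ∑ i ∈ Finset.range n, xi i * (Δ i - Δ (i + 1)) =
      (F.induced (U₁ ⊔ U₂)).deg + (F.induced (U₁ ⊓ U₂)).deg
        - (F.induced U₁).deg - (F.induced U₂).deg := by
    rw [hdeg (U₁ ⊔ U₂), hdeg (U₁ ⊓ U₂), hdeg U₁, hdeg U₂]
    rw [← Finset.sum_add_distrib, ← Finset.sum_sub_distrib, ← Finset.sum_sub_distrib]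
    apply Finset.sum_congr rfl
    intro i _
    simp only [hΔdef]
    ring
  rw [ge_iff_le]
  linarith [habel, hsum.symm]
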